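/- arXiv:1803.11313 — 2 statements merged into one kernel-verified Lean document; each statement's English description precedes it below -/
import Mathlib

section
/- Any vertex of the polytope {w ∈ R^{S*} : w ≥ 0, Σ_{h: h_i = x} w_h = d_i(x) for all i ≤ n, x ∈ P_i} has at most (Σ_{i=1}^n |P_i|) - n + 1 nonzero coordinates. -/
open Finset
open scoped Classical

/-!
Let `S` be the support of a vertex `w`. The columns of the constraint matrix indexed by `S` are
the incidence vectors `e_h ∈ ℝ^(⊔ᵢ Pᵢ)`, with a single `1` in each block. They are linearly
independent: a relation `z` among them leaves every marginal unchanged, so `w + ε z` and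
`w - ε z` would both be feasible for small `ε > 0`, contradicting extremality. Each `e_h` has all
`n` block sums equal to `1`, so they lie in the subspace of vectors with equal block sums, which
has codimension `n - 1`.
-/

theorem eq_zero_of_add_mem_of_sub_mem_of_mem_extremePoints {𝕜 E : Type*} [Ring 𝕜]
    [LinearOrder 𝕜] [IsStrictOrderedRing 𝕜] [Invertible (2 : 𝕜)] [AddCommGroup E] [Module 𝕜 E]
    {A : Set E} {x y : E} (hx : x ∈ A.extremePoints 𝕜) (h₁ : x + y ∈ A) (h₂ : x - y ∈ A) :
    y = 0 :=
  add_eq_left.1 (hx.2 h₁ h₂ (mem_openSegment_add_sub x y))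

theorem Finset.exists_pos_forall_mul_abs_le {ι : Type*} (s : Finset ι) {w : ι → ℝ}
    (hw : ∀ i ∈ s, 0 < w i) (z : ι → ℝ) : ∃ ε > 0, ∀ i ∈ s, ε * |z i| ≤ w i := by
  have : ∀ᶠ ε in nhds (0 : ℝ), ∀ i ∈ s, ε * |z i| ≤ w i := by
    refine s.eventually_all.2 fun i hi => ?_
    have : Filter.Tendsto (fun ε : ℝ => ε * |z i|) (nhds 0) (nhds 0) := by
      simpa using (continuous_mul_const |z i|).tendsto 0
    exact this.eventually (ge_mem_nhds (hw i hi))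
  obtain ⟨ε, hε, hεpos⟩ := ((this.filter_mono nhdsWithin_le_nhds).and
    (self_mem_nhdsWithin (s := Set.Ioi 0))).exists
  exact ⟨ε, hεpos, hε⟩

section BlockSums

variable {K ι : Type*} [Field K] (κ : ι → Type*) [∀ i, Fintype (κ i)]

def blockSum (i : ι) : ((Σ i, κ i) → K) →ₗ[K] K :=
  ∑ x : κ i, LinearMap.proj ⟨i, x⟩

theorem blockSum_apply (i : ι) (y : (Σ i, κ i) → K) :
    blockSum κ i y = ∑ x, y ⟨i, x⟩ := by
  simp [blockSum]

def blockSumDiff (i₀ : ι) : ((Σ i, κ i) → K) →ₗ[K] ({j // j ≠ i₀} → K) :=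
  LinearMap.pi fun j => blockSum κ j - blockSum κ i₀

theorem blockSumDiff_apply (i₀ : ι) (y : (Σ i, κ i) → K) (j : {j // j ≠ i₀}) :
    blockSumDiff κ i₀ y j = blockSum κ j y - blockSum κ i₀ y := rfl

theorem blockSumDiff_surjective [∀ i, Nonempty (κ i)] (i₀ : ι) :
    Function.Surjective (blockSumDiff (K := K) κ i₀) := by
  intro t
  let t' : ι → K := fun i => if h : i = i₀ then 0 else t ⟨i, h⟩
  refine ⟨fun ⟨i, x⟩ => if x = Classical.arbitrary (κ i) then t' i else 0, ?_⟩
  funext j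
  rw [blockSumDiff_apply, blockSum_apply, blockSum_apply]
  rw [Fintype.sum_ite_eq', Fintype.sum_ite_eq']
  simp [t', j.2]

theorem finrank_ker_blockSumDiff [Fintype ι] [∀ i, Nonempty (κ i)] (i₀ : ι) :
    Module.finrank K (LinearMap.ker (blockSumDiff (K := K) κ i₀)) + Fintype.card ι
      = ∑ i, Fintype.card (κ i) + 1 := by
  have hrank := LinearMap.finrank_range_add_finrank_ker (blockSumDiff (K := K) κ i₀)
  rw [LinearMap.range_eq_top.2 (blockSumDiff_surjective κ i₀), finrank_top, Module.finrank_pi,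
    Module.finrank_pi, Fintype.card_sigma, Fintype.card_subtype_compl,
    Fintype.card_subtype_eq] at hrank
  have : 0 < Fintype.card ι := Fintype.card_pos_iff.2 ⟨i₀⟩
  omega

end BlockSums

section Coupling

variable {α ι : Type*} [Fintype ι] [DecidableEq ι] (P : ι → Finset α)

noncomputable def marginal (v : (ι → α) → ℝ) (i : ι) (x : α) : ℝ :=
  ∑ h ∈ (Fintype.piFinset P).filter (fun h => h i = x), v h

def couplingPolytope (d : ι → α → ℝ) : Set ((ι → α) → ℝ) :=
  {v | (∀ h, 0 ≤ v h) ∧ (∀ h, h ∉ Fintype.piFinset P → v h = 0) ∧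
    ∀ i, ∀ x ∈ P i, marginal P v i x = d i x}

theorem marginal_add_smul (v z : (ι → α) → ℝ) (s : ℝ) (i : ι) (x : α) :
    marginal P (v + s • z) i x = marginal P v i x + s * marginal P z i x := by
  simp only [marginal, Pi.add_apply, Pi.smul_apply, smul_eq_mul, sum_add_distrib, mul_sum]

noncomputable def incidence (h : ι → α) : (Σ i, P i) → ℝ :=
  fun p => if h p.1 = p.2 then 1 else 0

variable {P}

theorem eq_zero_of_mem_extremePoints_couplingPolytope {d : ι → α → ℝ}
    {w z : (ι → α) → ℝ}
    (hw : w ∈ Set.extremePoints ℝ (couplingPolytope P d)) (hz : ∀ h, w h = 0 → z h = 0)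
    (hmarg : ∀ i, ∀ x ∈ P i, marginal P z i x = 0) : z = 0 := by
  obtain ⟨hw0, hwP, hwd⟩ := hw.1
  obtain ⟨ε, hε, hεz⟩ :=
    ((Fintype.piFinset P).filter (fun h => w h ≠ 0)).exists_pos_forall_mul_abs_le
      (fun h hh => (hw0 h).lt_of_ne' (mem_filter.1 hh).2) z
  have hbound : ∀ h, ε * |z h| ≤ w h := by
    intro h
    by_cases hwh : w h = 0
    · simp [hwh, hz h hwh]
    · exact hεz h (mem_filter.2 ⟨not_imp_comm.1 (hwP h) hwh, hwh⟩)
  have hmem : ∀ s, |s| ≤ ε → w + s • z ∈ couplingPolytope P d := by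
    intro s hs
    refine ⟨fun h => ?_, fun h hh => ?_, fun i x hx => ?_⟩
    · have : |s * z h| ≤ ε * |z h| := by rw [abs_mul]; gcongr
      simp only [Pi.add_apply, Pi.smul_apply, smul_eq_mul]
      linarith [neg_abs_le (s * z h), hbound h]
    · simp [hwP h hh, hz h (hwP h hh)]
    · rw [marginal_add_smul, hwd i x hx, hmarg i x hx, mul_zero, add_zero]
  have : ε • z = 0 :=
    eq_zero_of_add_mem_of_sub_mem_of_mem_extremePoints hw (hmem ε (abs_of_pos hε).le)
      (by simpa [sub_eq_add_neg] using hmem (-ε) (by rw [abs_neg, abs_of_pos hε]))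
  exact (smul_eq_zero.1 this).resolve_left hε.ne'

theorem blockSum_incidence {h : ι → α} (hh : h ∈ Fintype.piFinset P) (i : ι) :
    blockSum (fun i => P i) i (incidence P h) = 1 := by
  rw [blockSum_apply,
    ← Fintype.sum_ite_eq (⟨h i, Fintype.mem_piFinset.1 hh i⟩ : P i) fun _ => 1]
  simp [incidence, Subtype.ext_iff]

theorem incidence_mem_ker_blockSumDiff {h : ι → α} (hh : h ∈ Fintype.piFinset P) (i₀ : ι) :
    incidence P h ∈ LinearMap.ker (blockSumDiff (fun i => P i) i₀) :=
  LinearMap.mem_ker.2 <| funext fun j => by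
    rw [blockSumDiff_apply, blockSum_incidence hh, blockSum_incidence hh, sub_self,
      Pi.zero_apply]

theorem marginal_eq_sum_mul_incidence {S : Finset (ι → α)} (hS : S ⊆ Fintype.piFinset P)
    {z : (ι → α) → ℝ} (hz : ∀ h ∉ S, z h = 0) (i : ι) {x : α} (hx : x ∈ P i) :
    marginal P z i x = ∑ h ∈ S, z h * incidence P h ⟨i, x, hx⟩ := by
  rw [marginal, sum_filter, ← sum_subset hS fun h _ hhS => by simp [hz h hhS]]
  simp [incidence]

theorem linearIndependent_incidence_of_mem_extremePoints {d : ι → α → ℝ}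
    {w : (ι → α) → ℝ}
    (hw : w ∈ Set.extremePoints ℝ (couplingPolytope P d)) :
    LinearIndependent ℝ
      (fun h : (Fintype.piFinset P).filter (fun h => w h ≠ 0) => incidence P h) := by
  set S := (Fintype.piFinset P).filter (fun h => w h ≠ 0)
  rw [Fintype.linearIndependent_iff]
  intro g hg h
  let z : (ι → α) → ℝ := fun h => if hh : h ∈ S then g ⟨h, hh⟩ else 0
  have hzS : ∀ h ∉ S, z h = 0 := fun h hh => dif_neg hh
  have hz : z = 0 := by
    refine eq_zero_of_mem_extremePoints_couplingPolytope hw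
      (fun h hwh => hzS h fun hh => (mem_filter.1 hh).2 hwh) fun i x hx => ?_
    rw [marginal_eq_sum_mul_incidence (filter_subset _ _) hzS i hx, ← sum_coe_sort S]
    simpa [z] using congrFun hg ⟨i, x, hx⟩
  simpa [z] using congrFun hz h

end Coupling

theorem general_LP_vertex_sparsity_general {α : Type*} (n : ℕ) (hn : 1 ≤ n)
    (P : Fin n → Finset α) (d : (i : Fin n) → α → ℝ)
    (hd_sum : ∀ i, ∑ x ∈ P i, d i x = 1)
    (w : (Fin n → α) → ℝ)
    (hw : w ∈ Set.extremePoints ℝ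
      {v : (Fin n → α) → ℝ |
        (∀ h, 0 ≤ v h) ∧
        (∀ h, h ∉ Fintype.piFinset P → v h = 0) ∧
        (∀ i : Fin n, ∀ x ∈ P i,
          ∑ h ∈ (Fintype.piFinset P).filter (fun h => h i = x), v h = d i x)}) :
    ((Fintype.piFinset P).filter (fun h => w h ≠ 0)).card
      ≤ (∑ i, (P i).card) - n + 1 := by
  have : ∀ i, Nonempty (P i) := fun i =>
    (nonempty_of_sum_ne_zero (by rw [hd_sum i]; exact one_ne_zero)).to_subtype
  let i₀ : Fin n := ⟨0, hn⟩
  set S := (Fintype.piFinset P).filter (fun h => w h ≠ 0)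
  have hspan : Submodule.span ℝ (Set.range fun h : S => incidence P h)
      ≤ LinearMap.ker (blockSumDiff (fun i => P i) i₀) :=
    Submodule.span_le.2 <| Set.range_subset_iff.2 fun h =>
      incidence_mem_ker_blockSumDiff (mem_filter.1 h.2).1 i₀
  have hcard :
      #S ≤ Module.finrank ℝ (LinearMap.ker (blockSumDiff (K := ℝ) (fun i => P i) i₀)) := by
    rw [← Fintype.card_coe,
      ← finrank_span_eq_card (linearIndependent_incidence_of_mem_extremePoints hw)]
    exact Submodule.finrank_mono hspan
  have hdim := finrank_ker_blockSumDiff (K := ℝ) (fun i => P i) i₀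
  simp only [Fintype.card_coe, Fintype.card_fin] at hdim
  omega

/-- Sparsity of vertices: any extreme point of the feasible region of LP (general)
has at most `(∑ i, |P_i|) - n + 1` nonzero coordinates. -/
theorem general_LP_vertex_sparsity {α : Type*} (n : ℕ) (hn : 1 ≤ n)
    (P : Fin n → Finset α) (d : (i : Fin n) → α → ℝ)
    (hd_pos : ∀ i, ∀ x ∈ P i, 0 < d i x)
    (hd_sum : ∀ i, ∑ x ∈ P i, d i x = 1)
    (w : (Fin n → α) → ℝ)
    (hw : w ∈ Set.extremePoints ℝ
      {v : (Fin n → α) → ℝ |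
        (∀ h, 0 ≤ v h) ∧
        (∀ h, h ∉ Fintype.piFinset P → v h = 0) ∧
        (∀ i : Fin n, ∀ x ∈ P i,
          ∑ h ∈ (Fintype.piFinset P).filter (fun h => h i = x), v h = d i x)}) :
    ((Fintype.piFinset P).filter (fun h => w h ≠ 0)).card
      ≤ (∑ i, (P i).card) - n + 1 :=
  general_LP_vertex_sparsity_general n hn P d hd_sum w hw
end

section
/- Let n ≥ 2 measures P_1,...,P_n with at least one |P_i| ≥ 2 and weights λ_j > 0 summing to 1. Then there exist an index j (a weighted mean x_j ∈ S) and a pair (i,k) such that x_{ik} ∈ supp(P_i) does not appear in any representation x_j = Σ_l λ_l x_{lk'} with x_{lk'} ∈ supp(P_l) and the i-th chosen point equal to x_{ik}; i.e., (i,k) ∉ S_j for some j. -/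
open Finset
open scoped Classical

/-!
Pick a linear functional `φ` that is not constant on some `P i` with `2 ≤ #(P i)`, and in every
`P j` a point `m j` maximising `φ`. The mean `s = ∑ j, l j • m j` maximises `φ` over all weighted
means, and any representation of `s` must use a maximiser of `φ` in every coordinate, since the
weights are positive. So a point `x ∈ P i` that does not maximise `φ` is never used for `s`.
-/

section

variable {K E : Type*} [Field K] [LinearOrder K] [IsStrictOrderedRing K]
  [AddCommGroup E] [Module K E]

theorem Finset.exists_dual_lt_of_two_le_card {s : Finset E} (hs : 2 ≤ s.card) :
    ∃ φ : Module.Dual K E, ∃ x ∈ s, ∃ y ∈ s, φ x < φ y := by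
  obtain ⟨x, hx, y, hy, hxy⟩ := Finset.one_lt_card.mp hs
  obtain ⟨φ, hφ⟩ := Module.Projective.exists_dual_eq_one K (sub_ne_zero.mpr hxy.symm)
  refine ⟨φ, x, hx, y, hy, ?_⟩
  rw [map_sub] at hφ
  linarith

theorem Module.Dual.apply_sum_smul_lt {ι : Type*} [Fintype ι] (φ : Module.Dual K E)
    {l : ι → K} (hl : ∀ j, 0 < l j) {f g : ι → E} (hle : ∀ j, φ (f j) ≤ φ (g j))
    {i : ι} (hlt : φ (f i) < φ (g i)) :
    φ (∑ j, l j • f j) < φ (∑ j, l j • g j) := by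
  simp only [map_sum, map_smul, smul_eq_mul]
  exact Finset.sum_lt_sum (fun j _ => mul_le_mul_of_nonneg_left (hle j) (hl j).le)
    ⟨i, Finset.mem_univ i, mul_lt_mul_of_pos_left hlt (hl i)⟩

end

theorem exists_unused_pair_general (n d : ℕ)
    (P : Fin n → Finset (EuclideanSpace ℝ (Fin d)))
    (hPne : ∀ i, (P i).Nonempty) (hbig : ∃ i, 2 ≤ (P i).card)
    (l : Fin n → ℝ) (hl : ∀ i, 0 < l i) :
    ∃ s ∈ (Fintype.piFinset P).image
        (fun f : Fin n → EuclideanSpace ℝ (Fin d) => ∑ i, l i • f i),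
      ∃ i : Fin n, ∃ x ∈ P i,
        ¬ ∃ f ∈ Fintype.piFinset P, f i = x ∧ ∑ j, l j • f j = s := by
  obtain ⟨i, hi⟩ := hbig
  obtain ⟨φ, x, hx, y, hy, hxy⟩ := Finset.exists_dual_lt_of_two_le_card (K := ℝ) hi
  choose m hm hmax using fun j => (P j).exists_max_image φ (hPne j)
  refine ⟨∑ j, l j • m j, mem_image_of_mem _ (Fintype.mem_piFinset.mpr hm), i, x, hx, ?_⟩
  rintro ⟨f, hf, rfl, hfs⟩
  have hfP := Fintype.mem_piFinset.mp hf
  have hlt := φ.apply_sum_smul_lt hl (fun j => hmax j _ (hfP j)) (hxy.trans_le (hmax i y hy))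
  exact hlt.ne (congrArg φ hfs)

/-- For nontrivial input (`n ≥ 2` measures, at least one with two or more support
points), some weighted mean `s ∈ S` and some support point `x ∈ P i` exist such
that no combination of support points with `i`-th choice `x` has weighted mean `s`:
i.e. `(i,k) ∉ S_j` for some `j`, so the reduced LP drops at least one variable. -/
theorem exists_unused_pair (n d : ℕ) (hn : 2 ≤ n)
    (P : Fin n → Finset (EuclideanSpace ℝ (Fin d)))
    (hPne : ∀ i, (P i).Nonempty) (hbig : ∃ i, 2 ≤ (P i).card)
    (l : Fin n → ℝ) (hl : ∀ i, 0 < l i) (hsum : ∑ i, l i = 1) :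
    ∃ s ∈ (Fintype.piFinset P).image
        (fun f : Fin n → EuclideanSpace ℝ (Fin d) => ∑ i, l i • f i),
      ∃ i : Fin n, ∃ x ∈ P i,
        ¬ ∃ f ∈ Fintype.piFinset P, f i = x ∧ ∑ j, l j • f j = s :=
  exists_unused_pair_general n d P hPne hbig l hl
end
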